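/- Let i be an index and let ω_i = α_2 g_2 + ⋯ + α_n g_n be a representation with nonnegative integers α_k satisfying Σ_{k=2}^n α_k = b_i. If a_i = b_i, then α_2(g_2−g_1) + ⋯ + α_n(g_n−g_1) = ω'_i, which lies in Ap_{g_1}(S'). If instead a_i > b_i, then α_2(g_2−g_1) + ⋯ + α_n(g_n−g_1) ∉ Ap_{g_1}(S'). -/

import Mathlib

/-!
Common setup: the numerical semigroup ring `R = k[[t^S]]`, its maximal ideal `m`,
the associated graded ring `G(m)` (realized as the Rees algebra `R[mt]` modulo
the extension of `m`, the standard presentation of `⊕_{h≥0} m^h/m^{h+1}`),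
the homogeneous maximal ideal `𝓜`, the reduction number `r`, initial forms
`t^s*`, Apery sets, the invariants `a_i`, `b_i`, `l_i`, the order function,
the partial order `≤_M`, symmetry, `M`-purity, Buchsbaumness and
Cohen-Macaulayness (via their characterizations `(0:𝓜) = (0:𝓜^r)` and
`(0:𝓜^r) = 0` valid in this one-dimensional graded setting).
-/

set_option maxHeartbeats 1000000
set_option synthInstance.maxHeartbeats 1000000

open scoped Pointwise
open Polynomial

noncomputable section

namespace NumSgrp

/-- The numerical semigroup `S` generated by `g 0 < g 1 < ⋯ < g n`. -/
def S {n : ℕ} (g : Fin (n + 1) → ℕ) : AddSubmonoid ℕ := AddSubmonoid.closure (Set.range g)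

/-- `setM g h` is the `h`-fold sumset `M + ⋯ + M` of the maximal ideal
`M = S \ {0}`; by convention `setM g 0 = S` (corresponding to `m^0 = R`). -/
def setM {n : ℕ} (g : Fin (n + 1) → ℕ) : ℕ → Set ℕ
  | 0 => (S g : Set ℕ)
  | h+1 => ({u : ℕ | u ∈ S g ∧ u ≠ 0} + setM g h : Set ℕ)

/-- `ordS g s` = ord(s) = max { h | s ∈ hM }. -/
def ordS {n : ℕ} (g : Fin (n + 1) → ℕ) (s : ℕ) : ℕ := sSup {h | s ∈ setM g h}

/-- `ap g i` = ω_i, the least element of `S` congruent to `i` modulo `g 0`. -/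
def ap {n : ℕ} (g : Fin (n + 1) → ℕ) (i : ℕ) : ℕ := sInf {s | s ∈ S g ∧ s % g 0 = i}

/-- The Apery set `Ap_{g_1}(S) = {ω_0, …, ω_{g_1-1}}`. -/
def apSet {n : ℕ} (g : Fin (n + 1) → ℕ) : Set ℕ := {s | ∃ i < g 0, s = ap g i}

/-- The blow-up `S' = ⟨g_1, g_2 - g_1, …, g_n - g_1⟩`. -/
def S' {n : ℕ} (g : Fin (n + 1) → ℕ) : AddSubmonoid ℕ :=
  AddSubmonoid.closure (insert (g 0) (Set.range fun i => g i - g 0))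

/-- `ap' g i` = ω'_i, the least element of `S'` congruent to `i` modulo `g 0`. -/
def ap' {n : ℕ} (g : Fin (n + 1) → ℕ) (i : ℕ) : ℕ := sInf {s | s ∈ S' g ∧ s % g 0 = i}

/-- The Apery set `Ap_{g_1}(S') = {ω'_0, …, ω'_{g_1-1}}`. -/
def apSet' {n : ℕ} (g : Fin (n + 1) → ℕ) : Set ℕ := {s | ∃ i < g 0, s = ap' g i}

/-- `aa g i` = a_i, the unique integer with ω_i = ω'_i + a_i g_1. -/
def aa {n : ℕ} (g : Fin (n + 1) → ℕ) (i : ℕ) : ℕ := (ap g i - ap' g i) / g 0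

/-- `bb g i` = b_i = ord(ω_i). -/
def bb {n : ℕ} (g : Fin (n + 1) → ℕ) (i : ℕ) : ℕ := ordS g (ap g i)

/-- The partial order `u ≤_M u'`: there is `s ∈ S` with `u + s = u'` and
`ord u + ord s = ord u'`. -/
def leM {n : ℕ} (g : Fin (n + 1) → ℕ) (u v : ℕ) : Prop :=
  ∃ s ∈ S g, u + s = v ∧ ordS g u + ordS g s = ordS g v

/-- `maxAp_M(S)`: the maximal elements of the Apery set w.r.t. `≤_M`. -/
def maxAp {n : ℕ} (g : Fin (n + 1) → ℕ) : Set ℕ :=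
  {u | u ∈ apSet g ∧ ∀ v ∈ apSet g, leM g u v → v = u}

/-- `S` is `M`-pure: all elements of `maxAp_M(S)` have the same order. -/
def MPure {n : ℕ} (g : Fin (n + 1) → ℕ) : Prop :=
  ∀ u ∈ maxAp g, ∀ v ∈ maxAp g, ordS g u = ordS g v

/-- `S` viewed inside `ℤ`. -/
def SZ {n : ℕ} (g : Fin (n + 1) → ℕ) : Set ℤ := {x | ∃ s ∈ S g, (s : ℤ) = x}

/-- The Frobenius number `g(S) = max (ℤ \ S)`. -/
def frob {n : ℕ} (g : Fin (n + 1) → ℕ) : ℤ := sSup {x : ℤ | x ∉ SZ g}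

/-- `S` is symmetric: for every `x ∈ ℤ`, `x ∉ S` implies `g(S) - x ∈ S`. -/
def IsSymm {n : ℕ} (g : Fin (n + 1) → ℕ) : Prop :=
  ∀ x : ℤ, x ∉ SZ g → frob g - x ∈ SZ g

/-- Hypotheses: `g 0 < g 1 < ⋯ < g n` is a minimal system of generators with
gcd 1, so `S` is a numerical semigroup minimally generated by the `g i`. -/
structure MinGen {n : ℕ} (g : Fin (n + 1) → ℕ) : Prop where
  smono : StrictMono g
  minimal : ∀ i, g i ∉ AddSubmonoid.closure (Set.range g \ {g i})
  gcdeq : Finset.univ.gcd g = 1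

variable (k : Type*) [Field k] {n : ℕ} (g : Fin (n + 1) → ℕ)

/-- `R = k[[t^S]]`: the subalgebra of `k[[t]]` of power series supported in `S`. -/
def Rsub : Subalgebra k (PowerSeries k) where
  carrier := {f | ∀ i, PowerSeries.coeff i f ≠ 0 → i ∈ S g}
  zero_mem' := by intro i hi; simp at hi
  one_mem' := by
    intro i hi
    by_cases h : i = 0
    · exact h ▸ (S g).zero_mem
    · rw [PowerSeries.coeff_one, if_neg h] at hi; exact absurd rfl hi
  add_mem' := by
    intro a b ha hb i hi
    rw [map_add] at hi
    by_cases h : PowerSeries.coeff i a ≠ 0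
    · exact ha i h
    · push_neg at h
      rw [h, zero_add] at hi
      exact hb i hi
  mul_mem' := by
    intro a b ha hb i hi
    rw [PowerSeries.coeff_mul] at hi
    obtain ⟨p, hp, hne⟩ := Finset.exists_ne_zero_of_sum_ne_zero hi
    have h1 := ha p.1 (left_ne_zero_of_mul hne)
    have h2 := hb p.2 (right_ne_zero_of_mul hne)
    exact (Finset.HasAntidiagonal.mem_antidiagonal.mp hp) ▸ add_mem h1 h2
  algebraMap_mem' := by
    intro r i hi
    by_cases h : i = 0
    · exact h ▸ (S g).zero_mem
    · exfalso
      apply hi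
      have : (algebraMap k (PowerSeries k)) r = PowerSeries.C r := rfl
      rw [this, PowerSeries.coeff_C, if_neg h]

open Classical in
/-- `t^s` as an element of `R` (defined to be `0` if `s ∉ S`). -/
def tR (s : ℕ) : Rsub k g :=
  if h : s ∈ S g then
    ⟨PowerSeries.monomial s 1, by
      intro i hi
      rw [PowerSeries.coeff_monomial] at hi
      split at hi
      · next heq => exact heq ▸ h
      · exact absurd rfl hi⟩
  else 0

/-- `m = (t^{g_1}, …, t^{g_n})`, the maximal ideal of `R`. -/
def mI : Ideal (Rsub k g) := Ideal.span (Set.range fun i => tR k g (g i))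

lemma tR_mul {s u : ℕ} (hs : s ∈ S g) (hu : u ∈ S g) :
    tR k g (s + u) = tR k g s * tR k g u := by
  simp only [tR, dif_pos hs, dif_pos hu, dif_pos (add_mem hs hu)]
  apply Subtype.ext
  simp only [MulMemClass.coe_mul]
  show (PowerSeries.monomial (s + u)) (1 : k) =
    (PowerSeries.monomial s) 1 * (PowerSeries.monomial u) 1
  rw [← PowerSeries.X_pow_eq, ← PowerSeries.X_pow_eq, ← PowerSeries.X_pow_eq, pow_add]

lemma setM_subset : ∀ h : ℕ, setM g h ⊆ (S g : Set ℕ) := by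
  intro h
  induction h with
  | zero => exact fun s hs => hs
  | succ h ih =>
    rintro s ⟨u, hu, v, hv, huv⟩
    have : u + v = s := huv
    exact this ▸ add_mem hu.1 (ih hv)

lemma le_of_mem_setM : ∀ h : ℕ, ∀ s ∈ setM g h, h ≤ s := by
  intro h
  induction h with
  | zero => exact fun s _ => Nat.zero_le s
  | succ h ih =>
    rintro s ⟨u, hu, v, hv, huv⟩
    have hsum : u + v = s := huv
    have h1 : 1 ≤ u := Nat.one_le_iff_ne_zero.mpr hu.2
    have h2 := ih v hv
    omega

lemma tR_mem_mI {u : ℕ} (hu : u ∈ S g) (hne : u ≠ 0) : tR k g u ∈ mI k g := by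
  have key : ∀ (x : ℕ) (_ : x ∈ S g), x = 0 ∨ tR k g x ∈ mI k g := by
    intro x hx
    induction hx using AddSubmonoid.closure_induction with
    | mem y hy =>
      obtain ⟨i, rfl⟩ := hy
      exact Or.inr (Ideal.subset_span ⟨i, rfl⟩)
    | zero => exact Or.inl rfl
    | add x y hx hy px py =>
      rcases px with rfl | px
      · rcases py with rfl | py
        · exact Or.inl rfl
        · exact Or.inr (by rwa [zero_add])
      · refine Or.inr ?_
        rw [tR_mul k g hx hy]
        exact Ideal.mul_mem_right _ _ px
  rcases key u hu with rfl | h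
  · exact absurd rfl hne
  · exact h

lemma tR_mem_pow_of_setM : ∀ h : ℕ, ∀ s ∈ setM g h, tR k g s ∈ (mI k g) ^ h := by
  intro h
  induction h with
  | zero =>
    intro s _
    rw [pow_zero, Ideal.one_eq_top]
    exact Submodule.mem_top
  | succ h ih =>
    rintro s ⟨u, hu, v, hv, huv⟩
    have hsum : u + v = s := huv
    rw [← hsum, tR_mul k g hu.1 (setM_subset g h hv), pow_succ, mul_comm (tR k g u)]
    exact Ideal.mul_mem_mul (ih v hv) (tR_mem_mI k g hu.1 hu.2)

lemma mem_setM_ordS {s : ℕ} (hs : s ∈ S g) : s ∈ setM g (ordS g s) := by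
  have : ordS g s ∈ {h | s ∈ setM g h} :=
    Nat.sSup_mem (⟨0, hs⟩ : Set.Nonempty {h | s ∈ setM g h})
      ⟨s, fun h hh => le_of_mem_setM g h s hh⟩
  exact this

lemma tR_mem_pow (s : ℕ) : tR k g s ∈ (mI k g) ^ (ordS g s) := by
  by_cases hs : s ∈ S g
  · exact tR_mem_pow_of_setM k g _ s (mem_setM_ordS g hs)
  · rw [tR, dif_neg hs]
    exact zero_mem _

/-- `G(m) = ⊕_{h ≥ 0} m^h/m^{h+1}`, realized as the Rees algebra `R[mt]`
modulo the extension of `m` (the standard presentation of the associated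
graded ring of a local ring). -/
abbrev grG : Type _ :=
  (reesAlgebra (mI k g)) ⧸
    (Ideal.map (algebraMap (Rsub k g) (reesAlgebra (mI k g))) (mI k g))

/-- The homogeneous maximal ideal `𝓜 = m/m² ⊕ m²/m³ ⊕ ⋯` of `G(m)`: the image
of the ideal of elements of the Rees algebra whose degree-0 coefficient lies
in `m`. -/
def MM : Ideal (grG k g) :=
  Ideal.map (Ideal.Quotient.mk _)
    (Ideal.comap ((Polynomial.evalRingHom (0 : Rsub k g)).comp
      (reesAlgebra (mI k g)).val.toRingHom) (mI k g))

/-- The reduction number `r` of `m`: the least `r` with `m^{r+1} = t^{g_1}·m^r`. -/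
def rnum : ℕ :=
  sInf {j | (mI k g) ^ (j + 1) = Ideal.span {tR k g (g 0)} * (mI k g) ^ j}

/-- The initial form `t^s*` of `t^s` in `G(m)`, i.e. the image of `t^s` in
`m^{ord(s)}/m^{ord(s)+1}` (the degree-`ord(s)` component of `G(m)`). -/
def tstar (s : ℕ) : grG k g :=
  Ideal.Quotient.mk _
    ⟨(Polynomial.monomial (ordS g s)) (tR k g s),
      reesAlgebra.monomial_mem.mpr (tR_mem_pow k g s)⟩

/-- `(0 :_{G(m)} 𝓜^r) = H⁰_𝓜(G(m))`. -/
def annM : Ideal (grG k g) := Submodule.colon ⊥ ((MM k g ^ rnum k g : Ideal (grG k g)) : Set (grG k g))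

/-- `(0 :_{G(m)} 𝓜)`. -/
def ann1 : Ideal (grG k g) := Submodule.colon ⊥ (MM k g : Set (grG k g))

/-- `G(m)` is Buchsbaum iff `(0 :_{G(m)} 𝓜) = (0 :_{G(m)} 𝓜^r)`. -/
def IsBuchsbaum : Prop := ann1 k g = annM k g

/-- `G(m)` is Cohen-Macaulay iff `(0 :_{G(m)} 𝓜^r) = 0`. -/
def IsCM : Prop := annM k g = ⊥

/-- `l_i = max { l | t^{ω_i + l g_1}* ∈ (0 :_{G(m)} 𝓜^r) }`. -/
def lℓ (i : ℕ) : ℕ := sSup {l | tstar k g (ap g i + l * g 0) ∈ annM k g}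

/-- The length of a `G(m)`-module: the Krull dimension of its lattice of
submodules, i.e. the longest length of a chain of submodules. -/
def lenOf (M : Type*) [AddCommGroup M] [Module (grG k g) M] : WithBot ℕ∞ :=
  Order.krullDim (Submodule (grG k g) M)

/-- The socle `(0 :_{G/ξG} 𝓜) = ((ξ) :_G 𝓜)/(ξ)` of `G(m)/ξ·G(m)`, where
`ξ = t^{g_1}*` is the canonical degree-one homogeneous parameter of `G(m)`. -/
abbrev socQ : Type _ :=
  ↥(Submodule.colon (Ideal.span {tstar k g (g 0)}) (MM k g)) ⧸
    (Submodule.comap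
      (Submodule.colon (Ideal.span {tstar k g (g 0)}) (MM k g)).subtype
      (Ideal.span {tstar k g (g 0)}))

/-- `G(m)` is Gorenstein: Cohen-Macaulay of type 1, i.e. Cohen-Macaulay and
the socle of `G(m)` modulo the homogeneous parameter `ξ = t^{g_1}*` has
length 1 as a `G(m)`-module. -/
def IsGor : Prop := IsCM k g ∧ lenOf k g (socQ k g) = 1

/-!
Subtracting `g_1` from each of the `b_i` generators in the representation of `ω_i` gives
`T := Σ α_k (g_k - g_1)` with `T + b_i g_1 = ω_i = ω'_i + a_i g_1`. Hence `T ≡ i`, and since an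
element of `Ap_{g_1}(S')` is determined by its residue, `T ∈ Ap_{g_1}(S')` exactly when
`T = ω'_i`, i.e. when `a_i = b_i`.
-/

lemma sum_mul_tsub_add_sum_mul {ι : Type*} (s : Finset ι) (α f : ι → ℕ) {c : ℕ}
    (hc : ∀ j ∈ s, c ≤ f j) :
    ∑ j ∈ s, α j * (f j - c) + (∑ j ∈ s, α j) * c = ∑ j ∈ s, α j * f j := by
  rw [Finset.sum_mul, ← Finset.sum_add_distrib]
  refine Finset.sum_congr rfl fun j hj => ?_
  rw [← Nat.mul_add, Nat.sub_add_cancel (hc j hj)]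

section

variable {g}

lemma MinGen.g_zero_pos (hg : MinGen g) : 0 < g 0 := by
  refine Nat.pos_of_ne_zero fun h => hg.minimal 0 ?_
  rw [h]
  exact zero_mem _

lemma MinGen.setGcd_range (hg : MinGen g) : Nat.setGcd (Set.range g) = 1 := by
  have h : Nat.setGcd (Set.range g) ∣ Finset.univ.gcd g :=
    Finset.dvd_gcd fun j _ => Nat.setGcd_dvd_of_mem (Set.mem_range_self j)
  rwa [hg.gcdeq, Nat.dvd_one] at h

lemma MinGen.exists_mem_S_mod_eq (hg : MinGen g) {i : ℕ} (hi : i < g 0) :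
    ∃ s ∈ S g, s % g 0 = i := by
  obtain ⟨N, hN⟩ := Nat.exists_mem_closure_of_ge (Set.range g)
  refine ⟨N * g 0 + i, hN _ ?_ (by rw [hg.setGcd_range]; exact one_dvd _), ?_⟩
  · exact Nat.le_add_right_of_le (Nat.le_mul_of_pos_right N hg.g_zero_pos)
  · rw [Nat.mul_add_mod_self_right, Nat.mod_eq_of_lt hi]

lemma MinGen.ap_mem_mod (hg : MinGen g) {i : ℕ} (hi : i < g 0) :
    ap g i ∈ S g ∧ ap g i % g 0 = i :=
  Nat.sInf_mem (hg.exists_mem_S_mod_eq hi)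

lemma S_le_S' (hmono : Monotone g) : S g ≤ S' g := by
  refine AddSubmonoid.closure_le.mpr ?_
  rintro _ ⟨j, rfl⟩
  rw [← Nat.sub_add_cancel (hmono (Fin.zero_le j))]
  exact add_mem (AddSubmonoid.subset_closure (Set.mem_insert_of_mem _ ⟨j, rfl⟩))
    (AddSubmonoid.subset_closure (Set.mem_insert _ _))

lemma MinGen.ap'_mem_mod (hg : MinGen g) {i : ℕ} (hi : i < g 0) :
    ap' g i ∈ S' g ∧ ap' g i % g 0 = i :=
  have ⟨s, hs, hsi⟩ := hg.exists_mem_S_mod_eq hi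
  Nat.sInf_mem (s := {s | s ∈ S' g ∧ s % g 0 = i}) ⟨s, S_le_S' hg.smono.monotone hs, hsi⟩

lemma ap'_le {i s : ℕ} (hs : s ∈ S' g) (hsi : s % g 0 = i) : ap' g i ≤ s :=
  Nat.sInf_le (m := s) (s := {s | s ∈ S' g ∧ s % g 0 = i}) ⟨hs, hsi⟩

lemma MinGen.ap_eq_ap'_add_aa (hg : MinGen g) {i : ℕ} (hi : i < g 0) :
    ap g i = ap' g i + aa g i * g 0 := by
  obtain ⟨hω, hωi⟩ := hg.ap_mem_mod hi
  obtain ⟨-, hω'i⟩ := hg.ap'_mem_mod hi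
  have hle : ap' g i ≤ ap g i := ap'_le (S_le_S' hg.smono.monotone hω) hωi
  have hdvd : g 0 ∣ ap g i - ap' g i :=
    (Nat.modEq_iff_dvd' hle).mp (hω'i.trans hωi.symm)
  rw [aa, Nat.div_mul_cancel hdvd, Nat.add_sub_cancel' hle]

lemma MinGen.eq_ap'_of_mem_apSet' (hg : MinGen g) {i x : ℕ} (hx : x ∈ apSet' g)
    (hxi : x % g 0 = i) : x = ap' g i := by
  obtain ⟨j, hj, rfl⟩ := hx
  rw [← hxi, (hg.ap'_mem_mod hj).2]

end

theorem statement12_general {n : ℕ} (g : Fin (n + 1) → ℕ) (hg : MinGen g)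
    (i : ℕ) (hi : i < g 0) (α : Fin (n + 1) → ℕ)
    (hrep : ap g i = ∑ j, α j * g j) (hsum : ∑ j, α j = bb g i) :
    (aa g i = bb g i →
      (∑ j, α j * (g j - g 0)) = ap' g i ∧ (∑ j, α j * (g j - g 0)) ∈ apSet' g) ∧
    (bb g i < aa g i → (∑ j, α j * (g j - g 0)) ∉ apSet' g) := by
  set T := ∑ j, α j * (g j - g 0)
  have hT : T + bb g i * g 0 = ap' g i + aa g i * g 0 := by
    rw [← hg.ap_eq_ap'_add_aa hi, hrep, ← hsum]
    exact sum_mul_tsub_add_sum_mul _ α g fun j _ => hg.smono.monotone (Fin.zero_le j)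
  have hTi : T % g 0 = i := by
    rw [← Nat.add_mul_mod_self_right T (bb g i), hT, Nat.add_mul_mod_self_right,
      (hg.ap'_mem_mod hi).2]
  refine ⟨fun hab => ?_, fun hba hT' => ?_⟩
  · have hTω' : T = ap' g i := by rw [hab] at hT; exact Nat.add_right_cancel hT
    exact ⟨hTω', i, hi, hTω'⟩
  · rw [hg.eq_ap'_of_mem_apSet' hT' hTi] at hT
    exact hba.ne (Nat.eq_of_mul_eq_mul_right hg.g_zero_pos (Nat.add_left_cancel hT))

/-- Remark 20. Let `i` be an index and let
`ω_i = α_2 g_2 + ⋯ + α_n g_n` be a representation with `Σ α_k = b_i`. If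
`a_i = b_i`, then `α_2(g_2−g_1) + ⋯ + α_n(g_n−g_1) = ω'_i`, which lies in
`Ap_{g_1}(S')`. If instead `a_i > b_i`, then
`α_2(g_2−g_1) + ⋯ + α_n(g_n−g_1) ∉ Ap_{g_1}(S')`. -/
theorem statement12 {n : ℕ} (g : Fin (n + 1) → ℕ) (hg : MinGen g)
    (i : ℕ) (hi : i < g 0) (α : Fin (n + 1) → ℕ) (hα0 : α 0 = 0)
    (hrep : ap g i = ∑ j, α j * g j) (hsum : ∑ j, α j = bb g i) :
    (aa g i = bb g i →
      (∑ j, α j * (g j - g 0)) = ap' g i ∧ (∑ j, α j * (g j - g 0)) ∈ apSet' g) ∧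
    (bb g i < aa g i → (∑ j, α j * (g j - g 0)) ∉ apSet' g) :=
  statement12_general g hg i hi α hrep hsum

end NumSgrp
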